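/- arXiv:2505.11028 — 5 statements merged into one kernel-verified Lean document; each statement's English description precedes it below -/
import Mathlib

section
/- Let A be a nonnegative selfadjoint operator on a complex Hilbert space X with 0 ∈ σ(A) but 0 not an eigenvalue of A. Then for every α > 0, an element x ∈ X belongs to the range R(A^α) of the fractional power A^α if and only if the integral ∫₀^∞ t^{2α-1} ‖e^{-tA} x‖² dt is finite. -/
/-!
By the spectral theorem, every nonnegative selfadjoint operator `A` on a complex
Hilbert space `X` with `0 ∈ σ(A) \ σ_p(A)` is unitarily equivalent to the operator of
multiplication by a measurable function `a ≥ 0` (with `a > 0` a.e. and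
`essinf a = 0`) on some `L²(μ)`.  We formalize the statement in this spectral model:
`X = L²(μ)`, `(e^{-tA}x)(i) = exp(-t a i) x i`, `(A^α y)(i) = (a i)^α y i`, and
`x ∈ R(A^α)` iff `x = A^α y` for some `y ∈ L²(μ)`.
-/

open MeasureTheory Filter
open scoped ENNReal NNReal

/-- `‖e^{-tA} x‖²` in the spectral model. -/
noncomputable def heatNormSq {ι : Type*} [MeasurableSpace ι] (μ : Measure ι)
    (a : ι → ℝ) (x : ι → ℂ) (t : ℝ) : ℝ≥0∞ :=
  ∫⁻ i, (‖x i‖₊ : ℝ≥0∞) ^ 2 * ENNReal.ofReal (Real.exp (-(2 * t * a i))) ∂μ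

/-- `∫₀^∞ t^{2α-1} ‖e^{-tA} x‖² dt` in the spectral model. -/
noncomputable def rangeIntegral {ι : Type*} [MeasurableSpace ι] (μ : Measure ι)
    (a : ι → ℝ) (α : ℝ) (x : ι → ℂ) : ℝ≥0∞ :=
  ∫⁻ t in Set.Ioi (0 : ℝ), ENNReal.ofReal (t ^ (2 * α - 1)) * heatNormSq μ a x t

/-! Since `∫₀^∞ t^{2α-1} e^{-2tr} dt = Γ(2α) (2r)^{-2α}` for `r > 0`, Tonelli's theorem gives
`∫₀^∞ t^{2α-1} ‖e^{-tA}x‖² dt = Γ(2α) 2^{-2α} ‖a^{-α} x‖²`. Because `a > 0` a.e., `x = a^α y`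
with `y ∈ L²` exactly when `a^{-α} x ∈ L²`. Tonelli needs σ-finiteness, which holds on the
support of an `L²` function. -/

open Set Real

lemma lintegral_rpow_mul_exp_neg_mul_Ioi {s b : ℝ} (hs : 0 < s) (hb : 0 < b) :
    ∫⁻ t in Ioi 0, ENNReal.ofReal (t ^ (s - 1)) * ENNReal.ofReal (exp (-(b * t)))
      = ENNReal.ofReal ((1 / b) ^ s * Gamma s) := by
  have hI := integral_rpow_mul_exp_neg_mul_Ioi hs hb
  have hint : IntegrableOn (fun t : ℝ ↦ t ^ (s - 1) * exp (-(b * t))) (Ioi 0) := by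
    by_contra h
    rw [integral_undef h] at hI
    have : 0 < (1 / b) ^ s * Gamma s := by positivity
    linarith
  rw [← hI, ofReal_integral_eq_lintegral_ofReal hint]
  · refine setLIntegral_congr_fun measurableSet_Ioi fun t ht ↦ ?_
    rw [ENNReal.ofReal_mul (rpow_nonneg (le_of_lt ht) _)]
  · filter_upwards [ae_restrict_mem measurableSet_Ioi] with t ht
    exact mul_nonneg (rpow_nonneg (le_of_lt ht) _) (exp_pos _).le

lemma lintegral_rpow_mul_exp_neg_two_mul {α r : ℝ} (hα : 0 < α) (hr : 0 < r) :
    ∫⁻ t in Ioi 0, ENNReal.ofReal (t ^ (2 * α - 1)) * ENNReal.ofReal (exp (-(2 * t * r)))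
      = ENNReal.ofReal ((1 / 2) ^ (2 * α) * Gamma (2 * α)) * ENNReal.ofReal (r ^ (-α)) ^ 2 := by
  have hr' : (1 / (2 * r)) ^ (2 * α) = (1 / 2) ^ (2 * α) * (r ^ (-α)) ^ 2 := by
    rw [← rpow_mul_natCast hr.le, one_div, one_div, mul_inv,
      mul_rpow (by norm_num) (by positivity), inv_rpow hr.le, ← rpow_neg hr.le]
    ring_nf
  simp_rw [mul_right_comm 2 _ r]
  rw [lintegral_rpow_mul_exp_neg_mul_Ioi (by positivity) (by positivity), hr',
    ← ENNReal.ofReal_pow (by positivity), ← ENNReal.ofReal_mul (by positivity)]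
  ring_nf

section

variable {ι : Type*} [MeasurableSpace ι] {μ : Measure ι}

lemma memLp_two_iff_lintegral_nnnorm_sq_lt_top {E : Type*} [NormedAddCommGroup E] {f : ι → E}
    (hf : AEStronglyMeasurable f μ) :
    MemLp f 2 μ ↔ ∫⁻ i, (‖f i‖₊ : ℝ≥0∞) ^ 2 ∂μ < ⊤ := by
  rw [MemLp, eLpNorm_lt_top_iff_lintegral_rpow_enorm_lt_top two_ne_zero ENNReal.ofNat_ne_top]
  simp only [hf, true_and, ENNReal.toReal_ofNat, enorm_eq_nnnorm]
  norm_cast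

lemma setLIntegral_eq_lintegral_of_ae_eq_zero_compl {f : ι → ℝ≥0∞} {s : Set ι}
    (hs : MeasurableSet s) (hf : f =ᵐ[μ.restrict sᶜ] 0) :
    ∫⁻ i in s, f i ∂μ = ∫⁻ i, f i ∂μ := by
  rw [← lintegral_add_compl (μ := μ) f hs, lintegral_congr_ae hf, lintegral_zero_fun, add_zero]

variable {a : ι → ℝ} {α : ℝ} {x : ι → ℂ}

lemma exists_memLp_eq_rpow_mul_iff {p : ℝ≥0∞} (hpos : ∀ᵐ i ∂μ, 0 < a i) :
    (∃ y : ι → ℂ, MemLp y p μ ∧ x =ᵐ[μ] fun i ↦ ((a i ^ α : ℝ) : ℂ) * y i)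
      ↔ MemLp (fun i ↦ ((a i ^ (-α) : ℝ) : ℂ) * x i) p μ := by
  refine ⟨fun ⟨y, hy, hxy⟩ ↦ hy.ae_eq ?_, fun h ↦ ⟨_, h, ?_⟩⟩
  · filter_upwards [hpos, hxy] with i hi hxi
    rw [hxi, ← mul_assoc, ← Complex.ofReal_mul, ← rpow_add hi, neg_add_cancel, rpow_zero,
      Complex.ofReal_one, one_mul]
  · filter_upwards [hpos] with i hi
    rw [← mul_assoc, ← Complex.ofReal_mul, ← rpow_add hi, add_neg_cancel, rpow_zero,
      Complex.ofReal_one, one_mul]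

lemma rangeIntegral_eq_lintegral_mul_lintegral [SFinite μ] (ha : Measurable a)
    (hx : AEMeasurable x μ) :
    rangeIntegral μ a α x = ∫⁻ i, (‖x i‖₊ : ℝ≥0∞) ^ 2 *
      (∫⁻ t in Ioi 0, ENNReal.ofReal (t ^ (2 * α - 1)) *
        ENNReal.ofReal (exp (-(2 * t * a i)))) ∂μ := by
  have hmeas : AEMeasurable (Function.uncurry fun (t : ℝ) (i : ι) ↦
      ENNReal.ofReal (t ^ (2 * α - 1)) *
        ((‖x i‖₊ : ℝ≥0∞) ^ 2 * ENNReal.ofReal (exp (-(2 * t * a i)))))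
      ((volume.restrict (Ioi (0 : ℝ))).prod μ) := by
    have hx2 : AEMeasurable (fun p : ℝ × ι ↦ (‖x p.2‖₊ : ℝ≥0∞) ^ 2)
        ((volume.restrict (Ioi (0 : ℝ))).prod μ) :=
      (hx.nnnorm.coe_nnreal_ennreal.pow_const 2).comp_snd
    exact (Measurable.aemeasurable (by fun_prop)).mul
      (hx2.mul (Measurable.aemeasurable (by fun_prop)))
  simp_rw [rangeIntegral, heatNormSq, ← lintegral_const_mul' _ _ ENNReal.ofReal_ne_top]
  rw [lintegral_lintegral_swap hmeas]
  refine lintegral_congr fun i ↦ ?_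
  rw [← lintegral_const_mul' _ _ (by simp)]
  exact lintegral_congr fun t ↦ by ring

lemma rangeIntegral_eq_of_sFinite [SFinite μ] (ha : Measurable a) (hpos : ∀ᵐ i ∂μ, 0 < a i)
    (hα : 0 < α) (hx : AEMeasurable x μ) :
    rangeIntegral μ a α x = ENNReal.ofReal ((1 / 2) ^ (2 * α) * Gamma (2 * α)) *
      ∫⁻ i, (‖((a i ^ (-α) : ℝ) : ℂ) * x i‖₊ : ℝ≥0∞) ^ 2 ∂μ := by
  rw [rangeIntegral_eq_lintegral_mul_lintegral ha hx,
    ← lintegral_const_mul' _ _ ENNReal.ofReal_ne_top]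
  refine lintegral_congr_ae (hpos.mono fun i hi ↦ ?_)
  dsimp only
  rw [lintegral_rpow_mul_exp_neg_two_mul hα hi, nnnorm_mul, Complex.nnnorm_real, ENNReal.coe_mul,
    mul_pow, ← enorm_eq_nnnorm, ← enorm_eq_nnnorm, Real.enorm_eq_ofReal (rpow_nonneg hi.le _)]
  ring

lemma rangeIntegral_restrict {s : Set ι} (hs : MeasurableSet s) (hx : x =ᵐ[μ.restrict sᶜ] 0) :
    rangeIntegral (μ.restrict s) a α x = rangeIntegral μ a α x := by
  have heat : ∀ t, heatNormSq (μ.restrict s) a x t = heatNormSq μ a x t := fun t ↦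
    setLIntegral_eq_lintegral_of_ae_eq_zero_compl hs (hx.mono fun i hi ↦ by simp [hi])
  simp only [rangeIntegral, heat]

theorem rangeIntegral_eq (ha : Measurable a) (hpos : ∀ᵐ i ∂μ, 0 < a i) (hα : 0 < α)
    (hx : AEFinStronglyMeasurable x μ) :
    rangeIntegral μ a α x = ENNReal.ofReal ((1 / 2) ^ (2 * α) * Gamma (2 * α)) *
      ∫⁻ i, (‖((a i ^ (-α) : ℝ) : ℂ) * x i‖₊ : ℝ≥0∞) ^ 2 ∂μ := by
  have := hx.sigmaFinite_restrict
  rw [← rangeIntegral_restrict hx.measurableSet hx.ae_eq_zero_compl,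
    rangeIntegral_eq_of_sFinite ha (ae_restrict_of_ae hpos) hα hx.aemeasurable.restrict,
    setLIntegral_eq_lintegral_of_ae_eq_zero_compl hx.measurableSet
      (hx.ae_eq_zero_compl.mono fun i hi ↦ by simp [hi])]

end

theorem stmt0_general {ι : Type*} [MeasurableSpace ι] (μ : Measure ι)
    (a : ι → ℝ) (hameas : Measurable a) (ha0 : ∀ i, 0 ≤ a i)
    (hker : ∀ᵐ i ∂μ, a i ≠ 0)                      -- `0` is not an eigenvalue of `A`
    (α : ℝ) (hα : 0 < α) (x : ι → ℂ) (hx : MemLp x 2 μ) :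
    (∃ y : ι → ℂ, MemLp y 2 μ ∧ x =ᵐ[μ] fun i => ((a i ^ α : ℝ) : ℂ) * y i)
      ↔ rangeIntegral μ a α x < ⊤ := by
  have hpos : ∀ᵐ i ∂μ, 0 < a i := hker.mono fun i hi ↦ (ha0 i).lt_of_ne' hi
  have hK : ENNReal.ofReal ((1 / 2) ^ (2 * α) * Gamma (2 * α)) ≠ 0 := by
    rw [ne_eq, ENNReal.ofReal_eq_zero, not_le]
    positivity
  have hy : AEStronglyMeasurable (fun i ↦ ((a i ^ (-α) : ℝ) : ℂ) * x i) μ :=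
    (Complex.measurable_ofReal.comp (hameas.pow_const _)).aestronglyMeasurable.mul hx.1
  rw [exists_memLp_eq_rpow_mul_iff hpos, memLp_two_iff_lintegral_nnnorm_sq_lt_top hy,
    rangeIntegral_eq hameas hpos hα (hx.aefinStronglyMeasurable two_ne_zero ENNReal.ofNat_ne_top)]
  exact ⟨ENNReal.mul_lt_top ENNReal.ofReal_lt_top,
    fun h ↦ ENNReal.lt_top_of_mul_ne_top_right h.ne hK⟩

/-- For a nonnegative selfadjoint operator `A` with
`0 ∈ σ(A) \ σ_p(A)` and `α > 0`, an element `x ∈ X` belongs to `R(A^α)` iff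
`∫₀^∞ t^{2α-1} ‖e^{-tA}x‖² dt < ∞`. -/
theorem stmt0 {ι : Type*} [MeasurableSpace ι] (μ : Measure ι)
    (a : ι → ℝ) (hameas : Measurable a) (ha0 : ∀ i, 0 ≤ a i)
    (hker : ∀ᵐ i ∂μ, a i ≠ 0)                      -- `0` is not an eigenvalue of `A`
    (hspec : ∀ ε > (0 : ℝ), μ {i | a i < ε} ≠ 0)   -- `0 ∈ σ(A)`
    (α : ℝ) (hα : 0 < α) (x : ι → ℂ) (hx : MemLp x 2 μ) :
    (∃ y : ι → ℂ, MemLp y 2 μ ∧ x =ᵐ[μ] fun i => ((a i ^ α : ℝ) : ℂ) * y i)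
      ↔ rangeIntegral μ a α x < ⊤ :=
  stmt0_general μ a hameas ha0 hker α hα x hx
end

section
/- Let A be a nonnegative selfadjoint operator on a complex Hilbert space X with trivial kernel, and let α ∈ (0, 1/2). Then for every x ∈ D(A^{1/2}) with A^{1/2}x ∈ R(A^α) and x ∈ R(A^α), one has ‖x‖_X ≤ 2^{1/2 + α(1-2α)} · (∫₀^∞ t^{2α-1}‖e^{-tA}A^{1/2}x‖² dt)^{α} · (∫₀^∞ t^{2α-1}‖e^{-tA}x‖² dt)^{(1-2α)/2}. -/
/-!
By the spectral theorem, every nonnegative selfadjoint operator `A` on a complex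
Hilbert space `X` (with trivial kernel) is unitarily equivalent to multiplication by a
measurable function `a ≥ 0` (with `a > 0` a.e.) on some `L²(μ)`.  We formalize the
statement in this spectral model: `X = L²(μ)`, `(e^{-tA}x)(i) = exp(-t·a i)·x i`,
`(A^α y)(i) = (a i)^α·y i`, and `x ∈ R(A^α)` iff `x = A^α y` for some `y ∈ L²(μ)`.
-/

open MeasureTheory Filter
open scoped ENNReal NNReal Topology

/-! In the spectral model everything is an integral against the finite measure
`ν = |x|² μ`. By Tonelli and `∫₀^∞ t^{c-1} e^{-rt} dt = Γ(c) r^{-c}`,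
`|||x|||² = C ∫ a^{-2α} dν` and `|||A^{1/2}x|||² = C ∫ a^{1-2α} dν` with
`C = 2^{-2α} Γ(2α)`, while `‖x‖² = ν(ι)`. Hölder's inequality with exponents
`1/(2α)` and `1/(1-2α)`, applied to `1 = a^{(1-2α)2α} · a^{-2α(1-2α)}`, bounds `ν(ι)`;
the leftover constant is at least `1` because `Γ ≥ 1` on `(0, 1]`, by log-convexity of `Γ`
and `Γ 1 = Γ 2 = 1`. -/

open Set

theorem Real.one_le_Gamma_of_le_one {s : ℝ} (hs₀ : 0 < s) (hs₁ : s ≤ 1) : 1 ≤ Gamma s := by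
  have hconv := convexOn_log_Gamma
  have h2s : log (Gamma (2 - s)) ≤ 0 := by
    have := hconv.2 (mem_Ioi.2 one_pos) (mem_Ioi.2 two_pos) hs₀.le (sub_nonneg.2 hs₁) (by ring)
    simp only [smul_eq_mul, Function.comp_apply, Gamma_one, Gamma_two, log_one, mul_zero,
      add_zero] at this
    rwa [show s * 1 + (1 - s) * 2 = 2 - s by ring] at this
  have hmid : 0 ≤ log (Gamma s) + log (Gamma (2 - s)) := by
    have := hconv.2 (mem_Ioi.2 hs₀) (mem_Ioi.2 (by linarith : 0 < 2 - s))
      one_half_pos.le one_half_pos.le (add_halves 1)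
    simp only [smul_eq_mul, Function.comp_apply] at this
    rw [show 1 / 2 * s + 1 / 2 * (2 - s) = 1 by ring, Gamma_one, log_one] at this
    linarith
  by_contra! h
  linarith [log_neg (Gamma_pos_of_pos hs₀) h]

theorem one_le_two_rpow_mul_sqrt_two_rpow_mul_Gamma {α : ℝ} (hα₀ : 0 < α) (hα₁ : α < 1 / 2) :
    1 ≤ ENNReal.ofReal (2 ^ ((1 : ℝ) / 2 + α * (1 - 2 * α)))
      * ENNReal.ofReal (2 ^ (-(2 * α)) * Real.Gamma (2 * α)) ^ (1 / 2 : ℝ) := by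
  have hΓ : 1 ≤ Real.Gamma (2 * α) := Real.one_le_Gamma_of_le_one (by linarith) (by linarith)
  rw [ENNReal.ofReal_rpow_of_nonneg (by positivity) (by norm_num),
    ← ENNReal.ofReal_mul (by positivity),
    Real.mul_rpow (by positivity) (by positivity), ← Real.rpow_mul zero_le_two, ← mul_assoc,
    ← Real.rpow_add two_pos]
  refine ENNReal.one_le_ofReal.2 (one_le_mul_of_one_le_of_one_le ?_ ?_)
  · exact Real.one_le_rpow one_le_two (by nlinarith)
  · exact Real.one_le_rpow hΓ (by norm_num)

theorem lintegral_Ioi_rpow_mul_exp_neg_mul {c r : ℝ} (hc : 0 < c) (hr : 0 < r) :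
    ∫⁻ t in Ioi (0 : ℝ), ENNReal.ofReal (t ^ (c - 1)) * ENNReal.ofReal (Real.exp (-(r * t)))
      = ENNReal.ofReal (Real.Gamma c) * ENNReal.ofReal (r ^ (-c)) := by
  have hint : IntegrableOn (fun t : ℝ ↦ t ^ (c - 1) * Real.exp (-(r * t))) (Ioi 0) := by
    simpa [Real.rpow_one] using
      integrableOn_rpow_mul_exp_neg_mul_rpow (by linarith : (-1 : ℝ) < c - 1) one_pos hr
  have hnonneg : 0 ≤ᵐ[volume.restrict (Ioi 0)] fun t : ℝ ↦ t ^ (c - 1) * Real.exp (-(r * t)) := by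
    filter_upwards [ae_restrict_mem measurableSet_Ioi] with t (ht : 0 < t)
    positivity
  have hrc : (1 / r) ^ c * Real.Gamma c = Real.Gamma c * r ^ (-c) := by
    rw [one_div, Real.inv_rpow hr.le, Real.rpow_neg hr.le, mul_comm]
  rw [← ENNReal.ofReal_mul (Real.Gamma_pos_of_pos hc).le, ← hrc,
    ← Real.integral_rpow_mul_exp_neg_mul_Ioi hc hr,
    ofReal_integral_eq_lintegral_ofReal hint hnonneg]
  refine setLIntegral_congr_fun measurableSet_Ioi fun t (ht : 0 < t) ↦ ?_
  rw [ENNReal.ofReal_mul (Real.rpow_nonneg ht.le _)]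

section

variable {ι : Type*} [MeasurableSpace ι]

theorem lintegral_Ioi_rpow_mul_lintegral_exp_neg_mul
    {ν : Measure ι} [SFinite ν] {r : ι → ℝ} (hr : Measurable r) (hr₀ : ∀ᵐ i ∂ν, 0 < r i)
    {c : ℝ} (hc : 0 < c) :
    ∫⁻ t in Ioi (0 : ℝ),
        ENNReal.ofReal (t ^ (c - 1)) * ∫⁻ i, ENNReal.ofReal (Real.exp (-(r i * t))) ∂ν
      = ENNReal.ofReal (Real.Gamma c) * ∫⁻ i, ENNReal.ofReal (r i ^ (-c)) ∂ν := by
  calc _ = ∫⁻ t in Ioi (0 : ℝ), ∫⁻ i,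
          ENNReal.ofReal (t ^ (c - 1)) * ENNReal.ofReal (Real.exp (-(r i * t))) ∂ν := by
        simp_rw [lintegral_const_mul' _ _ ENNReal.ofReal_ne_top]
    _ = ∫⁻ i, (∫⁻ t in Ioi (0 : ℝ),
          ENNReal.ofReal (t ^ (c - 1)) * ENNReal.ofReal (Real.exp (-(r i * t)))) ∂ν :=
        lintegral_lintegral_swap (by fun_prop)
    _ = ∫⁻ i, ENNReal.ofReal (Real.Gamma c) * ENNReal.ofReal (r i ^ (-c)) ∂ν := by
        refine lintegral_congr_ae ?_
        filter_upwards [hr₀] with i hi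
        exact lintegral_Ioi_rpow_mul_exp_neg_mul hc hi
    _ = _ := lintegral_const_mul' _ _ ENNReal.ofReal_ne_top

theorem heatNormSq_eq_lintegral_withDensity {μ : Measure ι}
    {a : ι → ℝ} (ha : Measurable a) {z : ι → ℂ} (hz : AEMeasurable z μ) (t : ℝ) :
    heatNormSq μ a z t
      = ∫⁻ i, ENNReal.ofReal (Real.exp (-(2 * a i * t))) ∂μ.withDensity fun i ↦ ‖z i‖ₑ ^ 2 := by
  rw [lintegral_withDensity_eq_lintegral_mul₀ (hz.enorm.pow_const 2) (by fun_prop)]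
  simp only [heatNormSq, Pi.mul_apply, mul_right_comm (2 : ℝ)]
  rfl

theorem rangeIntegral_eq_lintegral_withDensity {μ : Measure ι}
    {a : ι → ℝ} (ha : Measurable a) (ha₀ : ∀ᵐ i ∂μ, 0 < a i) {α : ℝ} (hα : 0 < α)
    {z : ι → ℂ} (hz : AEMeasurable z μ) [SFinite (μ.withDensity fun i ↦ ‖z i‖ₑ ^ 2)] :
    rangeIntegral μ a α z = ENNReal.ofReal (2 ^ (-(2 * α)) * Real.Gamma (2 * α))
      * ∫⁻ i, ENNReal.ofReal (a i ^ (-(2 * α))) ∂μ.withDensity fun i ↦ ‖z i‖ₑ ^ 2 := by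
  have ha₀' : ∀ᵐ i ∂μ.withDensity (fun i ↦ ‖z i‖ₑ ^ 2), 0 < a i :=
    (withDensity_absolutelyContinuous _ _).ae_le ha₀
  simp_rw [rangeIntegral, heatNormSq_eq_lintegral_withDensity ha hz]
  rw [lintegral_Ioi_rpow_mul_lintegral_exp_neg_mul (by fun_prop)
      (ha₀'.mono fun i hi ↦ by positivity) (by positivity),
    ENNReal.ofReal_mul (by positivity), mul_comm (ENNReal.ofReal (2 ^ _)), mul_assoc,
    ← lintegral_const_mul' (ENNReal.ofReal (2 ^ (-(2 * α)))) _ ENNReal.ofReal_ne_top]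
  congr 1
  refine lintegral_congr_ae ?_
  filter_upwards [ha₀'] with i hi
  rw [Real.mul_rpow zero_le_two hi.le, ENNReal.ofReal_mul (by positivity)]

theorem measure_univ_le_lintegral_rpow_mul_lintegral_rpow
    {ν : Measure ι} {b : ι → ℝ} (hb : Measurable b) (hb₀ : ∀ᵐ i ∂ν, 0 < b i)
    {θ : ℝ} (hθ₀ : 0 ≤ θ) (hθ₁ : θ ≤ 1) :
    ν univ ≤ (∫⁻ i, ENNReal.ofReal (b i ^ (1 - θ)) ∂ν) ^ θ
      * (∫⁻ i, ENNReal.ofReal (b i ^ (-θ)) ∂ν) ^ (1 - θ) := by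
  refine le_of_eq_of_le ?_ (ENNReal.lintegral_mul_norm_pow_le (by fun_prop) (by fun_prop)
    hθ₀ (sub_nonneg.2 hθ₁) (add_sub_cancel θ 1))
  rw [← setLIntegral_one, Measure.restrict_univ]
  refine lintegral_congr_ae ?_
  filter_upwards [hb₀] with i hi
  rw [ENNReal.ofReal_rpow_of_nonneg (by positivity) hθ₀,
    ENNReal.ofReal_rpow_of_nonneg (by positivity) (sub_nonneg.2 hθ₁),
    ← ENNReal.ofReal_mul (by positivity), ← Real.rpow_mul hi.le, ← Real.rpow_mul hi.le,
    ← Real.rpow_add hi, show (1 - θ) * θ + -θ * (1 - θ) = 0 by ring, Real.rpow_zero,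
    ENNReal.ofReal_one]

theorem eLpNorm_two_eq_withDensity_univ {E : Type*} [NormedAddCommGroup E]
    (μ : Measure ι) (f : ι → E) :
    eLpNorm f 2 μ = (μ.withDensity fun i ↦ ‖f i‖ₑ ^ 2) univ ^ (1 / 2 : ℝ) := by
  rw [withDensity_apply _ MeasurableSet.univ, Measure.restrict_univ,
    eLpNorm_eq_lintegral_rpow_enorm_toReal two_ne_zero ENNReal.ofNat_ne_top]
  simp only [ENNReal.toReal_ofNat, ENNReal.rpow_ofNat, one_div]

theorem withDensity_enorm_sqrt_mul_sq {μ : Measure ι}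
    {a : ι → ℝ} (ha : Measurable a) (ha₀ : ∀ᵐ i ∂μ, 0 ≤ a i) {x : ι → ℂ} (hx : AEMeasurable x μ) :
    (μ.withDensity fun i ↦ ‖(Real.sqrt (a i) : ℂ) * x i‖ₑ ^ 2)
      = (μ.withDensity fun i ↦ ‖x i‖ₑ ^ 2).withDensity fun i ↦ ENNReal.ofReal (a i) := by
  rw [← withDensity_mul₀ (hx.enorm.pow_const 2) (by fun_prop)]
  refine withDensity_congr_ae ?_
  filter_upwards [ha₀] with i hi
  rw [Pi.mul_apply, enorm_mul, mul_pow, mul_comm, ← ofReal_norm (Real.sqrt (a i) : ℂ),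
    Complex.norm_real, Real.norm_of_nonneg (Real.sqrt_nonneg _),
    ← ENNReal.ofReal_pow (Real.sqrt_nonneg _), Real.sq_sqrt hi]

theorem rangeIntegral_sqrt_mul_eq_lintegral_withDensity {μ : Measure ι}
    {a : ι → ℝ} (ha : Measurable a) (ha₀ : ∀ᵐ i ∂μ, 0 < a i) {α : ℝ} (hα : 0 < α)
    {x : ι → ℂ} (hx : AEMeasurable x μ) [SFinite (μ.withDensity fun i ↦ ‖x i‖ₑ ^ 2)] :
    rangeIntegral μ a α (fun i ↦ (Real.sqrt (a i) : ℂ) * x i)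
      = ENNReal.ofReal (2 ^ (-(2 * α)) * Real.Gamma (2 * α))
        * ∫⁻ i, ENNReal.ofReal (a i ^ (1 - 2 * α)) ∂μ.withDensity fun i ↦ ‖x i‖ₑ ^ 2 := by
  have hsq := withDensity_enorm_sqrt_mul_sq ha (ha₀.mono fun _ hi ↦ hi.le) hx
  have : SFinite (μ.withDensity fun i ↦ ‖(Real.sqrt (a i) : ℂ) * x i‖ₑ ^ 2) :=
    hsq ▸ inferInstance
  rw [rangeIntegral_eq_lintegral_withDensity ha ha₀ hα (by fun_prop), hsq,
    lintegral_withDensity_eq_lintegral_mul _ (by fun_prop) (by fun_prop)]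
  congr 1
  refine lintegral_congr_ae ?_
  filter_upwards [(withDensity_absolutelyContinuous _ _).ae_le ha₀] with i hi
  rw [Pi.mul_apply, ← ENNReal.ofReal_mul hi.le, sub_eq_add_neg, Real.rpow_add hi, Real.rpow_one]

theorem isFiniteMeasure_withDensity_enorm_sq {E : Type*} [NormedAddCommGroup E] {μ : Measure ι}
    {f : ι → E} (hf : MemLp f 2 μ) : IsFiniteMeasure (μ.withDensity fun i ↦ ‖f i‖ₑ ^ 2) :=
  ⟨(ENNReal.rpow_lt_top_iff_of_pos one_half_pos).1
    (eLpNorm_two_eq_withDensity_univ μ f ▸ hf.eLpNorm_lt_top)⟩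

end

theorem stmt5_general {ι : Type*} [MeasurableSpace ι] (μ : Measure ι)
    (a : ι → ℝ) (hameas : Measurable a) (ha0 : ∀ i, 0 ≤ a i)
    (hker : ∀ᵐ i ∂μ, a i ≠ 0)
    (α : ℝ) (hα1 : 0 < α) (hα2 : α < 1 / 2)
    (x : ι → ℂ) (hx : MemLp x 2 μ) :
    eLpNorm x 2 μ
      ≤ ENNReal.ofReal (2 ^ ((1 : ℝ) / 2 + α * (1 - 2 * α))) *
        (rangeIntegral μ a α (fun i => ((Real.sqrt (a i) : ℝ) : ℂ) * x i)) ^ α *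
        (rangeIntegral μ a α x) ^ ((1 - 2 * α) / 2) := by
  have hpos : ∀ᵐ i ∂μ, 0 < a i := hker.mono fun i hi ↦ (ha0 i).lt_of_ne' hi
  set ν := μ.withDensity fun i ↦ ‖x i‖ₑ ^ 2
  have : IsFiniteMeasure ν := isFiniteMeasure_withDensity_enorm_sq hx
  set C := ENNReal.ofReal (2 ^ (-(2 * α)) * Real.Gamma (2 * α))
  set I₁ := ∫⁻ i, ENNReal.ofReal (a i ^ (1 - 2 * α)) ∂ν
  set I₂ := ∫⁻ i, ENNReal.ofReal (a i ^ (-(2 * α))) ∂ν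
  have hholder : ν univ ≤ I₁ ^ (2 * α) * I₂ ^ (1 - 2 * α) :=
    measure_univ_le_lintegral_rpow_mul_lintegral_rpow hameas
      ((withDensity_absolutelyContinuous _ _).ae_le hpos) (by linarith) (by linarith)
  have hC : C ≠ 0 := (ENNReal.ofReal_pos.2 (mul_pos (by positivity)
    (Real.Gamma_pos_of_pos (by linarith)))).ne'
  calc eLpNorm x 2 μ = ν univ ^ (1 / 2 : ℝ) := eLpNorm_two_eq_withDensity_univ μ x
    _ ≤ (I₁ ^ (2 * α) * I₂ ^ (1 - 2 * α)) ^ (1 / 2 : ℝ) := by gcongr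
    _ = I₁ ^ α * I₂ ^ ((1 - 2 * α) / 2) := by
        rw [ENNReal.mul_rpow_of_nonneg _ _ (by norm_num), ← ENNReal.rpow_mul, ← ENNReal.rpow_mul]
        ring_nf
    _ ≤ (ENNReal.ofReal (2 ^ ((1 : ℝ) / 2 + α * (1 - 2 * α))) * C ^ (1 / 2 : ℝ))
          * (I₁ ^ α * I₂ ^ ((1 - 2 * α) / 2)) :=
        le_mul_of_one_le_left' (one_le_two_rpow_mul_sqrt_two_rpow_mul_Gamma hα1 hα2)
    _ = ENNReal.ofReal (2 ^ ((1 : ℝ) / 2 + α * (1 - 2 * α))) * (C * I₁) ^ α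
          * (C * I₂) ^ ((1 - 2 * α) / 2) := by
        rw [ENNReal.mul_rpow_of_nonneg C I₁ hα1.le, ENNReal.mul_rpow_of_nonneg C I₂ (by linarith),
          show (1 / 2 : ℝ) = α + (1 - 2 * α) / 2 by ring,
          ENNReal.rpow_add _ _ hC ENNReal.ofReal_ne_top]
        ring
    _ = _ := by
        rw [rangeIntegral_sqrt_mul_eq_lintegral_withDensity hameas hpos hα1 hx.aemeasurable,
          rangeIntegral_eq_lintegral_withDensity hameas hpos hα1 hx.aemeasurable]

/-- Interpolation inequality: for `α ∈ (0,1/2)` and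
`x ∈ D(A^{1/2})` with `x ∈ R(A^α)` and `A^{1/2}x ∈ R(A^α)`,
`‖x‖_X ≤ 2^{1/2+α(1-2α)} |||A^{1/2}x|||_{R(A^α)}^{2α} |||x|||_{R(A^α)}^{1-2α}`,
where `|||z|||_{R(A^α)}² = rangeIntegral μ a α z`. -/
theorem stmt5 {ι : Type*} [MeasurableSpace ι] (μ : Measure ι)
    (a : ι → ℝ) (hameas : Measurable a) (ha0 : ∀ i, 0 ≤ a i)
    (hker : ∀ᵐ i ∂μ, a i ≠ 0)
    (α : ℝ) (hα1 : 0 < α) (hα2 : α < 1 / 2)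
    (x : ι → ℂ) (hx : MemLp x 2 μ)
    (hx12 : MemLp (fun i => ((Real.sqrt (a i) : ℝ) : ℂ) * x i) 2 μ)
    (hxR : MemLp x 2 μ ∧ ∃ y : ι → ℂ, MemLp y 2 μ ∧
      x =ᵐ[μ] fun i => ((a i ^ α : ℝ) : ℂ) * y i)
    (hAxR : ∃ y : ι → ℂ, MemLp y 2 μ ∧
      (fun i => ((Real.sqrt (a i) : ℝ) : ℂ) * x i) =ᵐ[μ] fun i => ((a i ^ α : ℝ) : ℂ) * y i) :
    eLpNorm x 2 μ
      ≤ ENNReal.ofReal (2 ^ ((1 : ℝ) / 2 + α * (1 - 2 * α))) *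
        (rangeIntegral μ a α (fun i => ((Real.sqrt (a i) : ℝ) : ℂ) * x i)) ^ α *
        (rangeIntegral μ a α x) ^ ((1 - 2 * α) / 2) :=
  stmt5_general μ a hameas ha0 hker α hα1 hα2 x hx
end

section
/- Let A be a nonnegative selfadjoint operator on a complex Hilbert space X. Then for every g ∈ X and every t > 0, the transmutation formula e^{-tA} g = (1/2) π^{-1/2} t^{-3/2} ∫₀^∞ σ e^{-σ²/(4t)} W_A(σ) g dσ holds, where W_A(σ)g = A^{-1/2} sin(σ A^{1/2}) g (defined via the bounded Borel functional calculus with the entire function λ ↦ sin(σ√λ)/√λ). -/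
/-!
By the spectral theorem, every nonnegative selfadjoint operator `A` on a complex
Hilbert space `X` (with trivial kernel) is unitarily equivalent to multiplication by a
measurable function `a ≥ 0` (with `a > 0` a.e.) on some `L²(μ)`.  We formalize the
statement in this spectral model: `X = L²(μ)`, `(e^{-tA}x)(i) = exp(-t·a i)·x i`,
`(A^α y)(i) = (a i)^α·y i`, and `x ∈ R(A^α)` iff `x = A^α y` for some `y ∈ L²(μ)`.
-/

open MeasureTheory Filter
open scoped ENNReal NNReal Topology

/-- The wave-propagator kernel `sin(t√λ)/√λ` (continuously extended by `t` at `λ = 0`),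
so that `(W_A(t)g)(i) = waveKernel t (a i) · g i` in the spectral model. -/
noncomputable def waveKernel (t lam : ℝ) : ℝ :=
  if lam = 0 then t else Real.sin (t * Real.sqrt lam) / Real.sqrt lam

/-!
In the spectral model everything acts diagonally, so the formula is the scalar identity at
`λ = a i ≥ 0`. Since `∂_σ W(σ, λ) = cos (σ √λ)` (also at `λ = 0`) and
`σ e^{-bσ²} = ∂_σ (-(2b)⁻¹ e^{-bσ²})`, one integration by parts over `ℝ` (the integrand is even)
reduces the right-hand side to the Fourier transform of a Gaussian,
`∫ e^{-bσ²} cos (σ √λ) dσ = √(π / b) e^{-λ / (4b)}`, and `b = 1 / (4t)` gives `e^{-tλ}`.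
-/

open Real Set

lemma waveKernel_of_pos {lam : ℝ} (hlam : 0 < lam) (σ : ℝ) :
    waveKernel σ lam = sin (σ * √lam) / √lam := if_neg hlam.ne'

lemma hasDerivAt_waveKernel {lam : ℝ} (hlam : 0 ≤ lam) (σ : ℝ) :
    HasDerivAt (waveKernel · lam) (cos (σ * √lam)) σ := by
  rcases hlam.eq_or_lt with rfl | hlam
  · simpa [waveKernel] using hasDerivAt_id' σ
  · have hc : √lam ≠ 0 := (sqrt_pos.2 hlam).ne'
    simp_rw [waveKernel_of_pos hlam]
    exact (((hasDerivAt_mul_const (√lam)).sin).div_const (√lam)).congr_deriv (by field_simp)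

lemma continuous_waveKernel {lam : ℝ} (hlam : 0 ≤ lam) : Continuous (waveKernel · lam) :=
  continuous_iff_continuousAt.2 fun σ => (hasDerivAt_waveKernel hlam σ).continuousAt

lemma waveKernel_neg (σ lam : ℝ) : waveKernel (-σ) lam = -waveKernel σ lam := by
  unfold waveKernel; split_ifs <;> simp [neg_mul, neg_div]

lemma abs_waveKernel_le (σ lam : ℝ) : |waveKernel σ lam| ≤ |σ| := by
  unfold waveKernel
  split_ifs
  · rfl
  rcases (sqrt_nonneg lam).eq_or_lt with hc | hc
  · simp [← hc]
  rw [abs_div, abs_of_pos hc, div_le_iff₀ hc]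
  calc _ ≤ |σ * √lam| := abs_sin_le_abs
    _ = _ := by rw [abs_mul, abs_of_pos hc]

lemma integral_exp_neg_mul_sq_mul_cos {b : ℝ} (hb : 0 < b) (c : ℝ) :
    ∫ x, exp (-b * x ^ 2) * cos (x * c) = √(π / b) * exp (-c ^ 2 / (4 * b)) := by
  have hb' : (-(b : ℂ)).re < 0 := by simpa using hb
  have hre : ∀ x : ℝ, exp (-b * x ^ 2) * cos (x * c)
      = RCLike.re (Complex.exp (-b * x ^ 2 + c * Complex.I * x + 0)) := by
    intro x
    rw [RCLike.re_to_complex, Complex.exp_re]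
    simp [← Complex.ofReal_pow, mul_comm]
  have hsqrt : (π / - -(b : ℂ)) ^ (1 / 2 : ℂ) = ((√(π / b) : ℝ) : ℂ) := by
    rw [neg_neg, sqrt_eq_rpow, ← Complex.ofReal_div, Complex.ofReal_cpow (by positivity)]
    norm_num
  have hexp : 0 - ((c : ℂ) * Complex.I) ^ 2 / (4 * -b) = ((-c ^ 2 / (4 * b) : ℝ) : ℂ) := by
    push_cast
    ring_nf
    simp only [Complex.I_sq]
    ring
  simp_rw [hre]
  rw [integral_re (integrable_cexp_quadratic' hb' _ _), integral_cexp_quadratic hb', hsqrt, hexp,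
    ← Complex.ofReal_exp, ← Complex.ofReal_mul, RCLike.re_to_complex, Complex.ofReal_re]

lemma integral_Ioi_eq_half_integral_of_even {f : ℝ → ℝ} (hf : ∀ x, f (-x) = f x)
    (hint : Integrable f) : ∫ x in Ioi 0, f x = (∫ x, f x) / 2 := by
  have hIic : ∫ x in Iic 0, f x = ∫ x in Ioi 0, f x := by
    rw [← neg_zero, ← integral_comp_neg_Ioi]
    simp only [hf, neg_zero]
  rw [← integral_add_compl measurableSet_Ioi hint, compl_Ioi, hIic]
  ring

lemma integrable_mul_exp_neg_mul_sq_mul_waveKernel {b lam : ℝ} (hb : 0 < b) (hlam : 0 ≤ lam) :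
    Integrable fun σ => σ * exp (-b * σ ^ 2) * waveKernel σ lam := by
  have hW := continuous_waveKernel hlam
  refine (integrable_rpow_mul_exp_neg_mul_sq hb (s := 2) (by norm_num)).mono'
    (by fun_prop) (Eventually.of_forall fun σ => ?_)
  rw [norm_mul, norm_mul, rpow_two, Real.norm_eq_abs, Real.norm_eq_abs, Real.norm_eq_abs,
    abs_exp, ← sq_abs, sq, mul_right_comm]
  gcongr _ * ?_ * _
  exact abs_waveKernel_le σ lam

lemma integral_mul_exp_neg_mul_sq_mul_waveKernel {b lam : ℝ} (hb : 0 < b) (hlam : 0 ≤ lam) :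
    ∫ σ, σ * exp (-b * σ ^ 2) * waveKernel σ lam
      = (2 * b)⁻¹ * ∫ σ, exp (-b * σ ^ 2) * cos (σ * √lam) := by
  set v : ℝ → ℝ := fun σ => -(2 * b)⁻¹ * exp (-b * σ ^ 2)
  have hv : ∀ σ, HasDerivAt v (σ * exp (-b * σ ^ 2)) σ := fun σ =>
    (((hasDerivAt_pow 2 σ).const_mul (-b)).exp.const_mul _).congr_deriv (by field_simp; norm_num)
  have hW := continuous_waveKernel hlam
  have hWv' : Integrable fun σ => waveKernel σ lam * (σ * exp (-b * σ ^ 2)) :=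
    (integrable_mul_exp_neg_mul_sq_mul_waveKernel hb hlam).congr
      (Eventually.of_forall fun σ => mul_comm _ _)
  have hcosv : Integrable fun σ => cos (σ * √lam) * v σ :=
    ((integrable_exp_neg_mul_sq hb).const_mul _).bdd_mul (by fun_prop)
      (Eventually.of_forall fun σ => abs_cos_le_one _)
  have hWv : Integrable fun σ => waveKernel σ lam * v σ := by
    refine ((integrable_mul_exp_neg_mul_sq hb).norm.const_mul (2 * b)⁻¹).mono'
      (by fun_prop) (Eventually.of_forall fun σ => ?_)
    simp only [v, norm_mul, norm_neg, Real.norm_eq_abs, abs_inv, abs_exp,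
      abs_of_pos (by positivity : 0 < 2 * b)]
    calc _ = (2 * b)⁻¹ * (|waveKernel σ lam| * exp (-b * σ ^ 2)) := by ring
      _ ≤ _ := by gcongr _ * (?_ * _); exact abs_waveKernel_le σ lam
  calc ∫ σ, σ * exp (-b * σ ^ 2) * waveKernel σ lam
      = ∫ σ, waveKernel σ lam * (σ * exp (-b * σ ^ 2)) := by simp only [mul_comm]
    _ = -∫ σ, cos (σ * √lam) * v σ := integral_mul_deriv_eq_deriv_mul_of_integrable
        (fun σ _ => hasDerivAt_waveKernel hlam σ) (fun σ _ => hv σ) hWv' hcosv hWv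
    _ = (2 * b)⁻¹ * ∫ σ, exp (-b * σ ^ 2) * cos (σ * √lam) := by
        rw [← integral_const_mul, ← integral_neg]
        refine integral_congr_ae (Eventually.of_forall fun σ => ?_)
        simp only [v]
        ring

lemma integral_Ioi_mul_exp_neg_mul_sq_mul_waveKernel {b lam : ℝ} (hb : 0 < b) (hlam : 0 ≤ lam) :
    ∫ σ in Ioi 0, σ * exp (-b * σ ^ 2) * waveKernel σ lam
      = (4 * b)⁻¹ * √(π / b) * exp (-lam / (4 * b)) := by
  have heven : ∀ σ, -σ * exp (-b * (-σ) ^ 2) * waveKernel (-σ) lam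
      = σ * exp (-b * σ ^ 2) * waveKernel σ lam := fun σ => by
    rw [waveKernel_neg, neg_sq]; ring
  rw [integral_Ioi_eq_half_integral_of_even heven
      (integrable_mul_exp_neg_mul_sq_mul_waveKernel hb hlam),
    integral_mul_exp_neg_mul_sq_mul_waveKernel hb hlam, integral_exp_neg_mul_sq_mul_cos hb,
    sq_sqrt hlam]
  field_simp
  ring

lemma exp_neg_mul_eq_integral_waveKernel {t lam : ℝ} (ht : 0 < t) (hlam : 0 ≤ lam) :
    exp (-(t * lam)) = (1 / 2) * π ^ (-(1 : ℝ) / 2) * t ^ (-(3 : ℝ) / 2) *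
      ∫ σ in Ioi 0, σ * exp (-(σ ^ 2 / (4 * t))) * waveKernel σ lam := by
  have hb : 0 < (4 * t)⁻¹ := by positivity
  have hexp (σ : ℝ) : exp (-(σ ^ 2 / (4 * t))) = exp (-(4 * t)⁻¹ * σ ^ 2) := by ring_nf
  have hpi : π ^ (-(1 : ℝ) / 2) = (√π)⁻¹ := by
    rw [neg_div, rpow_neg pi_nonneg, ← sqrt_eq_rpow]
  have ht32 : t ^ (-(3 : ℝ) / 2) = (t * √t)⁻¹ := by
    rw [show -(3 : ℝ) / 2 = -(1 + 1 / 2) by norm_num, rpow_neg ht.le, rpow_add ht, rpow_one,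
      ← sqrt_eq_rpow]
  have hsqrt : √(π / (4 * t)⁻¹) = 2 * √π * √t := by
    rw [div_inv_eq_mul, sqrt_mul pi_nonneg, sqrt_mul (by norm_num),
      show (4 : ℝ) = 2 ^ 2 by norm_num, sqrt_sq (by norm_num)]
    ring
  simp_rw [hexp]
  rw [integral_Ioi_mul_exp_neg_mul_sq_mul_waveKernel hb hlam, hpi, ht32, hsqrt]
  have hπ : √π ≠ 0 := (sqrt_pos.2 pi_pos).ne'
  have ht' : √t ≠ 0 := (sqrt_pos.2 ht).ne'
  field_simp

theorem stmt10_general {ι : Type*}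
    (a : ι → ℝ) (ha0 : ∀ i, 0 ≤ a i)
    (g : ι → ℂ) (t : ℝ) (ht : 0 < t) :
    ∀ i, ((Real.exp (-(t * a i)) : ℝ) : ℂ) * g i
      = (((1 / 2) * Real.pi ^ (-(1 : ℝ) / 2) * t ^ (-(3 : ℝ) / 2) : ℝ) : ℂ) *
          ∫ σ in Set.Ioi (0 : ℝ),
            ((σ * Real.exp (-(σ ^ 2 / (4 * t))) * waveKernel σ (a i) : ℝ) : ℂ) * g i := by
  intro i
  rw [integral_mul_const, integral_complex_ofReal, exp_neg_mul_eq_integral_waveKernel ht (ha0 i)]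
  push_cast
  ring

/-- Transmutation formula: for every `g ∈ X` and `t > 0`,
`e^{-tA} g = (1/2) π^{-1/2} t^{-3/2} ∫₀^∞ σ e^{-σ²/(4t)} W_A(σ) g dσ`
(stated pointwise on the spectral side, which is the identity in `X`). -/
theorem stmt10 {ι : Type*} [MeasurableSpace ι] (μ : Measure ι)
    (a : ι → ℝ) (hameas : Measurable a) (ha0 : ∀ i, 0 ≤ a i)
    (g : ι → ℂ) (hg : MemLp g 2 μ) (t : ℝ) (ht : 0 < t) :
    ∀ i, ((Real.exp (-(t * a i)) : ℝ) : ℂ) * g i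
      = (((1 / 2) * Real.pi ^ (-(1 : ℝ) / 2) * t ^ (-(3 : ℝ) / 2) : ℝ) : ℂ) *
          ∫ σ in Set.Ioi (0 : ℝ),
            ((σ * Real.exp (-(σ ^ 2 / (4 * t))) * waveKernel σ (a i) : ℝ) : ℂ) * g i :=
  stmt10_general a ha0 g t ht
end

section
/- Let Ω ⊆ ℝ^N be open and connected and let S be a nonnegative selfadjoint operator on L²(Ω) whose semigroup e^{-tS} is positivity preserving (f ≥ 0 implies e^{-tS}f ≥ 0 a.e.). Let α > 0 and suppose there exists a nonzero nonnegative g₀ ∈ R(S^α). If g ∈ L²(Ω) satisfies |g| ≤ C e^{-t₀S} g₀ a.e. for some constants C, t₀ > 0, then g ∈ R(S^α). -/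
/-!
A positivity-preserving linear `P` maps a real `f` with `-h ≤ f ≤ h` to `-Ph ≤ Pf ≤ Ph`, since
`P(h ∓ f) ≥ 0`. Applied to `Re g` and `Im g` with `h = C e^{-t₀S} g₀`, this gives
`‖e^{-tS} g‖ ≤ 2|C| ‖e^{-(t+t₀)S} g₀‖` for all `t ≥ 0`. Near `t = 0` the weight `t^{2α-1}` is
integrable and `‖e^{-tS} g‖ ≤ ‖g‖`; for `t ≥ 1` the weights `t^{2α-1}` and `(t+t₀)^{2α-1}` are
comparable, so the tail is bounded by the integral for `g₀` after the shift `s = t + t₀`.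
-/

open MeasureTheory Set
open scoped ENNReal

section PositiveOperator

variable {X : Type*} [MeasurableSpace X] {μ : Measure X} {P : (X → ℂ) → X → ℂ}

theorem norm_apply_le_re_of_abs_re_le (hP : IsLinearMap ℂ P)
    (hpos : ∀ f, (∀ᵐ x ∂μ, 0 ≤ (f x).re ∧ (f x).im = 0) →
      ∀ᵐ x ∂μ, 0 ≤ (P f x).re ∧ (P f x).im = 0)
    {f h : X → ℂ} (hf : ∀ x, (f x).im = 0) (hh : ∀ᵐ x ∂μ, (h x).im = 0)
    (hfh : ∀ᵐ x ∂μ, |(f x).re| ≤ (h x).re) :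
    ∀ᵐ x ∂μ, ‖P f x‖ ≤ (P h x).re := by
  have hsub := hpos (h - f) <| by
    filter_upwards [hh, hfh] with x hx hfx
    simp only [Pi.sub_apply, Complex.sub_re, Complex.sub_im, hx, hf x, sub_zero, and_true]
    linarith [le_abs_self (f x).re]
  have hadd := hpos (h + f) <| by
    filter_upwards [hh, hfh] with x hx hfx
    simp only [Pi.add_apply, Complex.add_re, Complex.add_im, hx, hf x, add_zero, and_true]
    linarith [neg_abs_le (f x).re]
  rw [hP.map_sub] at hsub
  rw [hP.map_add] at hadd
  filter_upwards [hsub, hadd] with x ⟨hre₁, him₁⟩ ⟨hre₂, him₂⟩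
  simp only [Pi.sub_apply, Pi.add_apply, Complex.sub_re, Complex.sub_im, Complex.add_re,
    Complex.add_im] at hre₁ him₁ hre₂ him₂
  rw [← Complex.abs_re_eq_norm.2 (by linarith), abs_le]
  constructor <;> linarith

theorem eLpNorm_apply_le_two_mul_of_norm_le_re (hP : IsLinearMap ℂ P)
    (hpos : ∀ f, (∀ᵐ x ∂μ, 0 ≤ (f x).re ∧ (f x).im = 0) →
      ∀ᵐ x ∂μ, 0 ≤ (P f x).re ∧ (P f x).im = 0)
    {g h : X → ℂ} (hh : ∀ᵐ x ∂μ, (h x).im = 0) (hgh : ∀ᵐ x ∂μ, ‖g x‖ ≤ (h x).re)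
    (p : ℝ≥0∞) :
    eLpNorm (P g) p μ ≤ 2 * eLpNorm (P h) p μ := by
  set a : X → ℂ := fun x ↦ ((g x).re : ℂ)
  set b : X → ℂ := fun x ↦ ((g x).im : ℂ)
  have hg : g = a + Complex.I • b := funext fun x ↦ by
    simpa [a, b, mul_comm] using (Complex.re_add_im (g x)).symm
  have ha := norm_apply_le_re_of_abs_re_le hP hpos (f := a) (fun x ↦ by simp [a]) hh
    (hgh.mono fun x hx ↦ by simpa [a] using (Complex.abs_re_le_norm _).trans hx)
  have hb := norm_apply_le_re_of_abs_re_le hP hpos (f := b) (fun x ↦ by simp [b]) hh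
    (hgh.mono fun x hx ↦ by simpa [b] using (Complex.abs_im_le_norm _).trans hx)
  have hPg : P g = P a + Complex.I • P b := by rw [hg, hP.map_add, hP.map_smul]
  have hpt : ∀ᵐ x ∂μ, ‖P g x‖ ≤ 2 * ‖P h x‖ := by
    filter_upwards [ha, hb] with x hax hbx
    calc ‖P g x‖ ≤ ‖P a x‖ + ‖P b x‖ := by
          simpa [hPg] using norm_add_le (P a x) (Complex.I * P b x)
      _ ≤ 2 * ‖P h x‖ := by linarith [Complex.re_le_norm (P h x)]
  simpa using eLpNorm_le_mul_eLpNorm_of_ae_le_mul hpt p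

end PositiveOperator

theorem setLIntegral_Ioc_rpow_mul_lt_top {β : ℝ} (hβ : -1 < β) {F : ℝ → ℝ≥0∞} {M : ℝ≥0∞}
    (hM : M ≠ ⊤) (hF : ∀ t ∈ Ioc (0 : ℝ) 1, F t ≤ M) :
    ∫⁻ t in Ioc (0 : ℝ) 1, ENNReal.ofReal (t ^ β) * F t < ⊤ := by
  have hint : IntegrableOn (fun t : ℝ ↦ t ^ β) (Ioc 0 1) :=
    (intervalIntegrable_iff_integrableOn_Ioc_of_le zero_le_one).1
      (intervalIntegral.intervalIntegrable_rpow' hβ)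
  calc ∫⁻ t in Ioc (0 : ℝ) 1, ENNReal.ofReal (t ^ β) * F t
      ≤ ∫⁻ t in Ioc (0 : ℝ) 1, ENNReal.ofReal (t ^ β) * M :=
        setLIntegral_mono' measurableSet_Ioc fun t ht ↦ by gcongr; exact hF t ht
    _ = (∫⁻ t in Ioc (0 : ℝ) 1, ENNReal.ofReal (t ^ β)) * M := lintegral_mul_const' _ _ hM
    _ < ⊤ := ENNReal.mul_lt_top hint.lintegral_lt_top hM.lt_top

theorem rpow_le_mul_rpow_add {β t t₀ : ℝ} (ht : 1 ≤ t) (ht₀ : 0 ≤ t₀) :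
    t ^ β ≤ max 1 ((1 + t₀) ^ (-β)) * (t + t₀) ^ β := by
  have ht' : 0 ≤ t := by linarith
  rcases le_or_gt 0 β with hβ | hβ
  · calc t ^ β ≤ (t + t₀) ^ β := Real.rpow_le_rpow ht' (by linarith) hβ
      _ ≤ _ := le_mul_of_one_le_left (by positivity) (le_max_left _ _)
  · calc t ^ β = (1 + t₀) ^ (-β) * (t * (1 + t₀)) ^ β := by
          rw [Real.mul_rpow ht' (by positivity), mul_left_comm, ← Real.rpow_add (by positivity),
            neg_add_cancel, Real.rpow_zero, mul_one]
      _ ≤ (1 + t₀) ^ (-β) * (t + t₀) ^ β := by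
          gcongr (1 + t₀) ^ (-β) * ?_
          exact Real.rpow_le_rpow_of_nonpos (by linarith) (by nlinarith) hβ.le
      _ ≤ _ := by gcongr; exact le_max_right _ _

theorem setLIntegral_Ioi_comp_add_right (f : ℝ → ℝ≥0∞) (a c : ℝ) :
    ∫⁻ t in Ioi a, f (t + c) = ∫⁻ s in Ioi (a + c), f s := by
  have hemb : MeasurableEmbedding (· + c) := (MeasurableEquiv.addRight c).measurableEmbedding
  have hpre : (· + c) ⁻¹' Ioi (a + c) = Ioi a := by ext; simp
  conv_rhs => rw [← map_add_right_eq_self volume c]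
  rw [Measure.restrict_map hemb.measurable measurableSet_Ioi, hemb.lintegral_map, hpre]

theorem setLIntegral_Ioi_one_rpow_mul_lt_top {β t₀ : ℝ} (ht₀ : 0 ≤ t₀) {F G : ℝ → ℝ≥0∞}
    {K : ℝ≥0∞} (hK : K ≠ ⊤) (hFG : ∀ t, 1 < t → F t ≤ K * G (t + t₀))
    (hG : ∫⁻ t in Ioi (0 : ℝ), ENNReal.ofReal (t ^ β) * G t < ⊤) :
    ∫⁻ t in Ioi (1 : ℝ), ENNReal.ofReal (t ^ β) * F t < ⊤ := by
  set L := ENNReal.ofReal (max 1 ((1 + t₀) ^ (-β))) * K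
  have hL : L ≠ ⊤ := ENNReal.mul_ne_top ENNReal.ofReal_ne_top hK
  have hpt : ∀ t ∈ Ioi (1 : ℝ), ENNReal.ofReal (t ^ β) * F t ≤
      L * (ENNReal.ofReal ((t + t₀) ^ β) * G (t + t₀)) := fun t ht ↦ by
    calc ENNReal.ofReal (t ^ β) * F t
        ≤ ENNReal.ofReal (max 1 ((1 + t₀) ^ (-β)) * (t + t₀) ^ β) * (K * G (t + t₀)) :=
          mul_le_mul' (ENNReal.ofReal_le_ofReal (rpow_le_mul_rpow_add (le_of_lt ht) ht₀))
            (hFG t ht)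
      _ = L * (ENNReal.ofReal ((t + t₀) ^ β) * G (t + t₀)) := by
          rw [ENNReal.ofReal_mul (by positivity)]; ring
  calc ∫⁻ t in Ioi (1 : ℝ), ENNReal.ofReal (t ^ β) * F t
      ≤ ∫⁻ t in Ioi (1 : ℝ), L * (ENNReal.ofReal ((t + t₀) ^ β) * G (t + t₀)) :=
        setLIntegral_mono' measurableSet_Ioi hpt
    _ = L * ∫⁻ s in Ioi (1 + t₀), ENNReal.ofReal (s ^ β) * G s := by
        rw [lintegral_const_mul' _ _ hL,
          setLIntegral_Ioi_comp_add_right (fun s ↦ ENNReal.ofReal (s ^ β) * G s)]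
    _ ≤ L * ∫⁻ s in Ioi (0 : ℝ), ENNReal.ofReal (s ^ β) * G s := by
        gcongr
        linarith
    _ < ⊤ := ENNReal.mul_lt_top hL.lt_top hG

theorem setLIntegral_Ioi_rpow_mul_lt_top_of_le_comp_add {β t₀ : ℝ} (hβ : -1 < β) (ht₀ : 0 ≤ t₀)
    {F G : ℝ → ℝ≥0∞} {M K : ℝ≥0∞} (hM : M ≠ ⊤) (hK : K ≠ ⊤)
    (hFM : ∀ t ∈ Ioc (0 : ℝ) 1, F t ≤ M) (hFG : ∀ t, 1 < t → F t ≤ K * G (t + t₀))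
    (hG : ∫⁻ t in Ioi (0 : ℝ), ENNReal.ofReal (t ^ β) * G t < ⊤) :
    ∫⁻ t in Ioi (0 : ℝ), ENNReal.ofReal (t ^ β) * F t < ⊤ := by
  rw [← Ioc_union_Ioi_eq_Ioi zero_le_one, lintegral_union measurableSet_Ioi Ioc_disjoint_Ioi_same]
  exact ENNReal.add_lt_top.2 ⟨setLIntegral_Ioc_rpow_mul_lt_top hβ hM hFM,
    setLIntegral_Ioi_one_rpow_mul_lt_top ht₀ hK hFG hG⟩

theorem stmt14_general {N : ℕ}
    (μ : Measure (EuclideanSpace ℝ (Fin N)))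
    -- the semigroup `T t = e^{-tS}` of `S` and its characteristic properties:
    (T : ℝ → (EuclideanSpace ℝ (Fin N) → ℂ) → (EuclideanSpace ℝ (Fin N) → ℂ))
    (hTlin : ∀ t, IsLinearMap ℂ (T t))
    (hTsemi : ∀ s t, 0 ≤ s → 0 ≤ t → ∀ f, T (s + t) f =ᵐ[μ] T s (T t f))
    (hTcontr : ∀ t, 0 ≤ t → ∀ f, eLpNorm (T t f) 2 μ ≤ eLpNorm f 2 μ)
    -- positivity preserving: `f ≥ 0` a.e. implies `e^{-tS} f ≥ 0` a.e.
    (hTpos : ∀ t, 0 ≤ t → ∀ f, (∀ᵐ x ∂μ, 0 ≤ (f x).re ∧ (f x).im = 0) →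
      (∀ᵐ x ∂μ, 0 ≤ (T t f x).re ∧ (T t f x).im = 0))
    (α : ℝ) (hα : 0 < α)
    -- a nonzero nonnegative `g₀ ∈ R(S^α)`:
    (g₀ : EuclideanSpace ℝ (Fin N) → ℂ)
    (hg₀pos : ∀ᵐ x ∂μ, 0 ≤ (g₀ x).re ∧ (g₀ x).im = 0)
    (hg₀R : (∫⁻ t in Set.Ioi (0 : ℝ),
      ENNReal.ofReal (t ^ (2 * α - 1)) * (eLpNorm (T t g₀) 2 μ) ^ 2) < ⊤)
    -- the function `g`:
    (g : EuclideanSpace ℝ (Fin N) → ℂ) (hg : MemLp g 2 μ)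
    (C t₀ : ℝ) (ht₀ : 0 < t₀)
    (hdom : ∀ᵐ x ∂μ, ‖g x‖ ≤ C * (T t₀ g₀ x).re) :
    (∫⁻ t in Set.Ioi (0 : ℝ),
      ENNReal.ofReal (t ^ (2 * α - 1)) * (eLpNorm (T t g) 2 μ) ^ 2) < ⊤ := by
  have hreal : ∀ᵐ x ∂μ, (((C : ℂ) • T t₀ g₀) x).im = 0 :=
    (hTpos t₀ ht₀.le g₀ hg₀pos).mono fun x hx ↦ by simp [hx.2]
  have hdom' : ∀ᵐ x ∂μ, ‖g x‖ ≤ (((C : ℂ) • T t₀ g₀) x).re := by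
    filter_upwards [hTpos t₀ ht₀.le g₀ hg₀pos, hdom] with x hx hgx
    simpa [hx.2] using hgx
  have hshift : ∀ t, 0 ≤ t →
      eLpNorm (T t g) 2 μ ≤ 2 * ‖(C : ℂ)‖ₑ * eLpNorm (T (t + t₀) g₀) 2 μ := fun t ht ↦ by
    calc eLpNorm (T t g) 2 μ ≤ 2 * eLpNorm (T t ((C : ℂ) • T t₀ g₀)) 2 μ :=
          eLpNorm_apply_le_two_mul_of_norm_le_re (hTlin t) (hTpos t ht) hreal hdom' 2
      _ = 2 * ‖(C : ℂ)‖ₑ * eLpNorm (T (t + t₀) g₀) 2 μ := by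
          rw [(hTlin t).map_smul, eLpNorm_const_smul,
            eLpNorm_congr_ae (hTsemi t t₀ ht ht₀.le g₀), mul_assoc]
  have hnear : ∀ t ∈ Ioc (0 : ℝ) 1, eLpNorm (T t g) 2 μ ^ 2 ≤ eLpNorm g 2 μ ^ 2 :=
    fun t ht ↦ by gcongr; exact hTcontr t ht.1.le g
  have hfar : ∀ t, 1 < t → eLpNorm (T t g) 2 μ ^ 2 ≤
      (2 * ‖(C : ℂ)‖ₑ) ^ 2 * eLpNorm (T (t + t₀) g₀) 2 μ ^ 2 := fun t ht ↦ by
    rw [← mul_pow]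
    gcongr
    exact hshift t (by linarith)
  exact setLIntegral_Ioi_rpow_mul_lt_top_of_le_comp_add (by linarith) ht₀.le
    (ENNReal.pow_ne_top hg.2.ne) (by simp [ENNReal.mul_eq_top]) hnear hfar hg₀R

/-- Let `Ω ⊆ ℝ^N` be open and connected, `S` nonnegative selfadjoint
on `L²(Ω)` with positivity-preserving semigroup `e^{-tS}`, `α > 0`, and suppose there
is a nonzero nonnegative `g₀ ∈ R(S^α)`.  If `g ∈ L²(Ω)` satisfies
`|g| ≤ C e^{-t₀S} g₀` a.e. for some `C, t₀ > 0`, then `g ∈ R(S^α)`. -/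
theorem stmt14 {N : ℕ} (Ω : Set (EuclideanSpace ℝ (Fin N)))
    (hΩopen : IsOpen Ω) (hΩconn : IsConnected Ω)
    (μ : Measure (EuclideanSpace ℝ (Fin N))) (hμ : μ = volume.restrict Ω)
    -- the semigroup `T t = e^{-tS}` of `S` and its characteristic properties:
    (T : ℝ → (EuclideanSpace ℝ (Fin N) → ℂ) → (EuclideanSpace ℝ (Fin N) → ℂ))
    (hT0 : ∀ f, T 0 f = f)
    (hTlin : ∀ t, IsLinearMap ℂ (T t))
    (hTae : ∀ t f₁ f₂, f₁ =ᵐ[μ] f₂ → T t f₁ =ᵐ[μ] T t f₂)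
    (hTsemi : ∀ s t, 0 ≤ s → 0 ≤ t → ∀ f, T (s + t) f =ᵐ[μ] T s (T t f))
    (hTcontr : ∀ t, 0 ≤ t → ∀ f, eLpNorm (T t f) 2 μ ≤ eLpNorm f 2 μ)
    (hTsa : ∀ t, 0 ≤ t → ∀ f h, MemLp f 2 μ → MemLp h 2 μ →
      ∫ x, (starRingEnd ℂ) (T t f x) * h x ∂μ = ∫ x, (starRingEnd ℂ) (f x) * T t h x ∂μ)
    -- positivity preserving: `f ≥ 0` a.e. implies `e^{-tS} f ≥ 0` a.e.
    (hTpos : ∀ t, 0 ≤ t → ∀ f, (∀ᵐ x ∂μ, 0 ≤ (f x).re ∧ (f x).im = 0) →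
      (∀ᵐ x ∂μ, 0 ≤ (T t f x).re ∧ (T t f x).im = 0))
    (α : ℝ) (hα : 0 < α)
    -- a nonzero nonnegative `g₀ ∈ R(S^α)`:
    (g₀ : EuclideanSpace ℝ (Fin N) → ℂ) (hg₀L2 : MemLp g₀ 2 μ)
    (hg₀pos : ∀ᵐ x ∂μ, 0 ≤ (g₀ x).re ∧ (g₀ x).im = 0)
    (hg₀ne : ¬ g₀ =ᵐ[μ] 0)
    (hg₀R : (∫⁻ t in Set.Ioi (0 : ℝ),
      ENNReal.ofReal (t ^ (2 * α - 1)) * (eLpNorm (T t g₀) 2 μ) ^ 2) < ⊤)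
    -- the function `g`:
    (g : EuclideanSpace ℝ (Fin N) → ℂ) (hg : MemLp g 2 μ)
    (C t₀ : ℝ) (hC : 0 < C) (ht₀ : 0 < t₀)
    (hdom : ∀ᵐ x ∂μ, ‖g x‖ ≤ C * (T t₀ g₀ x).re) :
    (∫⁻ t in Set.Ioi (0 : ℝ),
      ENNReal.ofReal (t ^ (2 * α - 1)) * (eLpNorm (T t g) 2 μ) ^ 2) < ⊤ :=
  stmt14_general μ T hTlin hTsemi hTcontr hTpos α hα g₀ hg₀pos hg₀R g hg C t₀ ht₀ hdom
end

section
/- Let A be a nonnegative selfadjoint operator on a complex Hilbert space X and α > 0. Then ∫ₙ^m ∫ₙ^m t^{α-1} s^{α-1} ‖e^{-(t+s)A/2} x‖²_X dt ds ≤ 4^α B(α,α) ∫ₙ^m τ^{2α-1} ‖e^{-τA} x‖²_X dτ for all 0 < n < m and x ∈ X, where B is the Beta function. -/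
/-!
By the spectral theorem, every nonnegative selfadjoint operator `A` on a complex
Hilbert space `X` (with trivial kernel) is unitarily equivalent to multiplication by a
measurable function `a ≥ 0` (with `a > 0` a.e.) on some `L²(μ)`.  We formalize the
statement in this spectral model: `X = L²(μ)`, `(e^{-tA}x)(i) = exp(-t·a i)·x i`,
`(A^α y)(i) = (a i)^α·y i`, and `x ∈ R(A^α)` iff `x = A^α y` for some `y ∈ L²(μ)`.
-/

open MeasureTheory Filter
open scoped ENNReal NNReal Topology

open Set

lemma realBeta {α : ℝ} (hα : 0 < α) {u : ℝ} (hu : 0 < u) :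
    IntervalIntegrable (fun x : ℝ => x ^ (α-1) * (u - x) ^ (α-1)) volume 0 u ∧
    ∫ x in (0:ℝ)..u, x ^ (α-1) * (u - x) ^ (α-1)
      = u ^ (2*α-1) * (Real.Gamma α ^ 2 / Real.Gamma (2*α)) := by
  have hre : (0:ℝ) < Complex.re (α : ℂ) := by simpa using hα
  have hcongr : EqOn (fun x : ℝ => ((x ^ (α-1) * (u - x) ^ (α-1) : ℝ) : ℂ))
      (fun x : ℝ => (x:ℂ) ^ ((α:ℂ)-1) * ((u:ℂ) - x) ^ ((α:ℂ)-1)) (uIcc 0 u) := by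
    intro x hx
    rw [uIcc_of_le hu.le] at hx
    have hux : 0 ≤ u - x := by linarith [hx.2]
    have e1 : ((α:ℂ) - 1) = ((α - 1 : ℝ) : ℂ) := by push_cast; ring
    simp only [Complex.ofReal_mul, e1]
    rw [Complex.ofReal_cpow hx.1, Complex.ofReal_cpow hux]
    push_cast
    ring_nf
  -- integrability of the complex integrand on 0..u
  have h01 := Complex.betaIntegral_convergent hre hre
  have hscaled := (h01.comp_mul_left (c := u⁻¹)).const_mul ((u:ℂ) ^ ((α:ℂ)-1) * (u:ℂ) ^ ((α:ℂ)-1))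
  rw [zero_div, one_div, inv_inv] at hscaled
  have hint : IntervalIntegrable
      (fun x : ℝ => (x:ℂ) ^ ((α:ℂ)-1) * ((u:ℂ) - x) ^ ((α:ℂ)-1)) volume 0 u := by
    apply hscaled.congr_ae
    refine Filter.eventuallyEq_of_mem (self_mem_ae_restrict measurableSet_uIoc) ?_
    intro x hx
    rw [uIoc_of_le hu.le] at hx
    have hx1 : 0 ≤ u⁻¹ * x := mul_nonneg (by positivity) hx.1.le
    have hx2 : 0 ≤ 1 - u⁻¹ * x := by
      rw [sub_nonneg]
      calc u⁻¹ * x ≤ u⁻¹ * u := by gcongr; exact hx.2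
      _ = 1 := by field_simp
    have hu0 : (u:ℂ) ≠ 0 := by exact_mod_cast hu.ne'
    have ex : (x:ℂ) = (u:ℂ) * ((u⁻¹ * x : ℝ) : ℂ) := by push_cast; field_simp
    have eux : ((u:ℂ) - x) = (u:ℂ) * ((1 - u⁻¹ * x : ℝ) : ℂ) := by
      push_cast; field_simp
    simp only
    rw [eux, ex, Complex.mul_cpow_ofReal_nonneg hu.le hx1,
      Complex.mul_cpow_ofReal_nonneg hu.le hx2,
      show ((1 - u⁻¹ * x : ℝ) : ℂ) = 1 - ((u⁻¹ * x : ℝ) : ℂ) by push_cast; ring]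
    ring
  -- real integrability
  have haeq : (fun x : ℝ => (x:ℂ) ^ ((α:ℂ)-1) * ((u:ℂ) - x) ^ ((α:ℂ)-1))
      =ᵐ[volume.restrict (Set.uIoc (0:ℝ) u)] (fun x : ℝ => ((x ^ (α-1) * (u - x) ^ (α-1) : ℝ) : ℂ)) :=
    Filter.eventuallyEq_of_mem (self_mem_ae_restrict measurableSet_uIoc)
      (fun x hx => (hcongr (uIoc_subset_uIcc hx)).symm)
  have hofReal := hint.congr_ae haeq
  have hintR : IntervalIntegrable (fun x : ℝ => x ^ (α-1) * (u - x) ^ (α-1)) volume 0 u := by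
    constructor
    · simpa [IntegrableOn] using hofReal.1.re
    · simpa [IntegrableOn] using hofReal.2.re
  refine ⟨hintR, ?_⟩
  -- the value
  have hval := Complex.betaIntegral_scaled (α:ℂ) (α:ℂ) hu
  have hbeta : Complex.betaIntegral (α:ℂ) (α:ℂ)
      = ((Real.Gamma α ^ 2 / Real.Gamma (2*α) : ℝ) : ℂ) := by
    have h2 : (0:ℝ) < Real.Gamma (2*α) := Real.Gamma_pos_of_pos (by linarith)
    have := (Complex.Gamma_mul_Gamma_eq_betaIntegral hre hre).symm
    have e2 : ((α:ℂ) + α) = ((2*α : ℝ) : ℂ) := by push_cast; ring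
    rw [e2, Complex.Gamma_ofReal, Complex.Gamma_ofReal] at this
    have hc : ((Real.Gamma (2*α) : ℝ) : ℂ) ≠ 0 := by exact_mod_cast h2.ne'
    push_cast
    rw [eq_div_iff hc]
    linear_combination this
  rw [hbeta] at hval
  have hlhs : ∫ x in (0:ℝ)..u, (x:ℂ) ^ ((α:ℂ)-1) * ((u:ℂ) - x) ^ ((α:ℂ)-1)
      = ((∫ x in (0:ℝ)..u, x ^ (α-1) * (u - x) ^ (α-1) : ℝ) : ℂ) := by
    rw [← intervalIntegral.integral_ofReal]
    exact intervalIntegral.integral_congr (fun x hx => (hcongr hx).symm)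
  have hrhs : ((u:ℂ) ^ ((α:ℂ) + α - 1)) = ((u ^ (2*α-1) : ℝ) : ℂ) := by
    have e3 : ((α:ℂ) + α - 1) = ((2*α - 1 : ℝ) : ℂ) := by push_cast; ring
    rw [e3, Complex.ofReal_cpow hu.le]
  rw [hlhs, hrhs, ← Complex.ofReal_mul] at hval
  exact_mod_cast hval


open scoped ENNReal

lemma measurable_rpow_const (c : ℝ) : Measurable fun t : ℝ => t ^ c := by
  have he : (fun t : ℝ => t ^ c) = fun t =>
      if t = 0 then (0:ℝ) ^ c
      else if 0 < t then Real.exp (Real.log t * c)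
      else Real.exp (Real.log t * c) * Real.cos (c * Real.pi) := by
    funext t
    split_ifs with h1 h2
    · rw [h1]
    · rw [Real.rpow_def_of_pos h2]
    · rw [Real.rpow_def_of_neg (lt_of_le_of_ne (not_lt.1 h2) h1)]
  rw [he]
  refine Measurable.ite (measurableSet_eq) measurable_const
    (Measurable.ite ?_ ?_ ?_)
  · exact measurableSet_lt measurable_const measurable_id
  · exact Real.measurable_exp.comp (Real.measurable_log.mul_const c)
  · exact (Real.measurable_exp.comp (Real.measurable_log.mul_const c)).mul_const _

noncomputable def Fker (α n m : ℝ) (H : ℝ → ℝ≥0∞) (t s : ℝ) : ℝ≥0∞ :=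
  (Ioi (0:ℝ)).indicator 1 t * (Ioi (0:ℝ)).indicator 1 s *
    (Icc (2*n) (2*m)).indicator 1 (t+s) *
    ENNReal.ofReal (t ^ (α-1)) * ENNReal.ofReal (s ^ (α-1)) * H ((t+s)/2)

lemma key (H : ℝ → ℝ≥0∞) (hH : Measurable H) {α : ℝ} (hα : 0 < α)
    {n m : ℝ} (hn : 0 < n) (hnm : n < m) :
    ∫⁻ t in Icc n m, ∫⁻ s in Icc n m,
        ENNReal.ofReal (t ^ (α-1) * s ^ (α-1)) * H ((t+s)/2)
      ≤ ENNReal.ofReal ((4:ℝ) ^ α * (Real.Gamma α ^ 2 / Real.Gamma (2*α))) *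
          ∫⁻ τ in Icc n m, ENNReal.ofReal (τ ^ (2*α-1)) * H τ := by
  set B : ℝ := Real.Gamma α ^ 2 / Real.Gamma (2*α) with hB
  have hB0 : 0 < B := by
    have := Real.Gamma_pos_of_pos hα
    have := Real.Gamma_pos_of_pos (show (0:ℝ) < 2*α by linarith)
    positivity
  have hFm : Measurable (fun p : ℝ × ℝ => Fker α n m H p.1 p.2) := by
    unfold Fker
    apply Measurable.mul
    apply Measurable.mul
    apply Measurable.mul
    apply Measurable.mul
    apply Measurable.mul
    · exact (measurable_const.indicator measurableSet_Ioi).comp measurable_fst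
    · exact (measurable_const.indicator measurableSet_Ioi).comp measurable_snd
    · exact (measurable_const.indicator measurableSet_Icc).comp
        (measurable_fst.add measurable_snd)
    · exact ENNReal.measurable_ofReal.comp
        ((measurable_rpow_const (α-1)).comp measurable_fst)
    · exact ENNReal.measurable_ofReal.comp
        ((measurable_rpow_const (α-1)).comp measurable_snd)
    · exact hH.comp ((measurable_fst.add measurable_snd).div_const 2)
  -- Step A
  have stepA : (∫⁻ t in Icc n m, ∫⁻ s in Icc n m,
        ENNReal.ofReal (t ^ (α-1) * s ^ (α-1)) * H ((t+s)/2))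
      ≤ ∫⁻ t, ∫⁻ s, Fker α n m H t s := by
    rw [← lintegral_indicator measurableSet_Icc]
    refine lintegral_mono fun t => ?_
    by_cases ht : t ∈ Icc n m
    · rw [indicator_of_mem ht]
      rw [← lintegral_indicator measurableSet_Icc]
      refine lintegral_mono fun s => ?_
      by_cases hs : s ∈ Icc n m
      · rw [indicator_of_mem hs]
        have ht0 : 0 < t := lt_of_lt_of_le hn ht.1
        have hs0 : 0 < s := lt_of_lt_of_le hn hs.1
        have hts : t + s ∈ Icc (2*n) (2*m) :=
          ⟨by linarith [ht.1, hs.1], by linarith [ht.2, hs.2]⟩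
        unfold Fker
        rw [indicator_of_mem (mem_Ioi.2 ht0), indicator_of_mem (mem_Ioi.2 hs0),
          indicator_of_mem hts, ENNReal.ofReal_mul (Real.rpow_nonneg ht0.le _)]
        simp only [Pi.one_apply, one_mul]
        exact le_of_eq (by ring)
      · rw [indicator_of_notMem hs]; exact zero_le
    · rw [indicator_of_notMem ht]; exact zero_le
  have hIoom : ∀ u : ℝ, Measurable ((Ioo (0:ℝ) u).indicator
      (fun t => ENNReal.ofReal (t ^ (α-1) * (u-t) ^ (α-1)))) := by
    intro u
    refine Measurable.indicator (ENNReal.measurable_ofReal.comp ?_) measurableSet_Ioo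
    exact (measurable_rpow_const (α-1)).mul
      ((measurable_rpow_const (α-1)).comp (measurable_const.sub measurable_id))
  -- Step B+C : translate and swap
  have stepBC : (∫⁻ t, ∫⁻ s, Fker α n m H t s)
      = ∫⁻ u, ∫⁻ t, Fker α n m H t (u - t) := by
    have hB' : ∀ t : ℝ, (∫⁻ s, Fker α n m H t s) = ∫⁻ u, Fker α n m H t (u - t) := by
      intro t
      rw [← lintegral_add_right_eq_self (fun u => Fker α n m H t u) (-t)]
      simp [sub_eq_add_neg]
    simp_rw [hB']
    exact lintegral_lintegral_swap
      (hFm.comp ((measurable_fst).prodMk (measurable_snd.sub measurable_fst))).aemeasurable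
  -- Step D/E : inner integral over t via the Beta integral
  have stepD : ∀ u : ℝ, (∫⁻ t, Fker α n m H t (u - t))
      = (Icc (2*n) (2*m)).indicator
          (fun u => ENNReal.ofReal (u ^ (2*α-1) * B) * H (u/2)) u := by
    intro u
    by_cases hu : u ∈ Icc (2*n) (2*m)
    · have hu0 : (0:ℝ) < u := lt_of_lt_of_le (by linarith) hu.1
      have hbeta := realBeta hα hu0
      have e : ∀ t : ℝ, Fker α n m H t (u - t)
          = (Ioo 0 u).indicator
              (fun t => ENNReal.ofReal (t ^ (α-1) * (u-t) ^ (α-1))) t * H (u/2) := by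
        intro t
        unfold Fker
        rw [show t + (u - t) = u by ring, indicator_of_mem hu]
        by_cases ht : t ∈ Ioo (0:ℝ) u
        · rw [indicator_of_mem (mem_Ioi.2 ht.1),
            indicator_of_mem (mem_Ioi.2 (sub_pos.2 ht.2)), indicator_of_mem ht,
            ENNReal.ofReal_mul (Real.rpow_nonneg ht.1.le _)]
          simp only [Pi.one_apply, one_mul]
        · rw [indicator_of_notMem ht]
          rcases not_and_or.1 (fun h => ht ⟨lt_of_not_ge h.1, lt_of_not_ge h.2⟩ :
              ¬(¬t ≤ 0 ∧ ¬u ≤ t)) with h | h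
          · rw [indicator_of_notMem (by simpa using not_not.1 h : t ∉ Ioi (0:ℝ))]
            simp
          · rw [indicator_of_notMem
              (by simpa using not_lt.2 (sub_nonpos.2 (not_not.1 h)) : u - t ∉ Ioi (0:ℝ))]
            simp
      simp_rw [e]
      rw [lintegral_mul_const _ (hIoom u), lintegral_indicator measurableSet_Ioo,
        indicator_of_mem hu]
      congr 1
      have hInt : IntegrableOn (fun t : ℝ => t ^ (α-1) * (u-t) ^ (α-1)) (Ioo 0 u) volume :=
        (((intervalIntegrable_iff_integrableOn_Ioc_of_le hu0.le).1 hbeta.1).mono_set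
          Ioo_subset_Ioc_self)
      have hnn : 0 ≤ᵐ[volume.restrict (Ioo (0:ℝ) u)]
          fun t : ℝ => t ^ (α-1) * (u-t) ^ (α-1) := by
        refine (ae_restrict_iff' measurableSet_Ioo).2 (Filter.Eventually.of_forall fun t ht => ?_)
        exact mul_nonneg (Real.rpow_nonneg ht.1.le _)
          (Real.rpow_nonneg (by linarith [ht.2]) _)
      rw [← ofReal_integral_eq_lintegral_ofReal hInt hnn]
      congr 1
      rw [← integral_Ioc_eq_integral_Ioo, ← intervalIntegral.integral_of_le hu0.le, hbeta.2]
    · rw [indicator_of_notMem hu]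
      have hz : ∀ t : ℝ, Fker α n m H t (u - t) = 0 := by
        intro t
        unfold Fker
        rw [show t + (u - t) = u by ring, indicator_of_notMem hu]
        ring
      simp [hz]
  -- Step F : scaling u = 2τ
  have hgm : Measurable ((Icc (2*n) (2*m)).indicator
      (fun u => ENNReal.ofReal (u ^ (2*α-1) * B) * H (u/2))) := by
    refine Measurable.indicator ?_ measurableSet_Icc
    exact Measurable.mul
      (ENNReal.measurable_ofReal.comp ((measurable_rpow_const (2*α-1)).mul_const B))
      (hH.comp (measurable_id.div_const 2))
  have stepF : (∫⁻ u, (Icc (2*n) (2*m)).indicator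
        (fun u => ENNReal.ofReal (u ^ (2*α-1) * B) * H (u/2)) u)
      ≤ ENNReal.ofReal ((4:ℝ) ^ α * B) *
          ∫⁻ τ in Icc n m, ENNReal.ofReal (τ ^ (2*α-1)) * H τ := by
    have hscale : (∫⁻ u, (Icc (2*n) (2*m)).indicator
          (fun u => ENNReal.ofReal (u ^ (2*α-1) * B) * H (u/2)) u)
        = ENNReal.ofReal |2| * ∫⁻ τ, (Icc (2*n) (2*m)).indicator
            (fun u => ENNReal.ofReal (u ^ (2*α-1) * B) * H (u/2)) (2*τ) := by
      conv_lhs => rw [← Real.smul_map_volume_mul_left (two_ne_zero (α := ℝ))]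
      rw [lintegral_smul_measure, lintegral_map hgm (measurable_const_mul 2), smul_eq_mul]
    rw [hscale, ← lintegral_const_mul' _ _ ENNReal.ofReal_ne_top]
    have hpt : ∀ τ : ℝ, ENNReal.ofReal |2| * (Icc (2*n) (2*m)).indicator
          (fun u => ENNReal.ofReal (u ^ (2*α-1) * B) * H (u/2)) (2*τ)
        ≤ (Icc n m).indicator
            (fun τ => ENNReal.ofReal ((4:ℝ) ^ α * B) *
              (ENNReal.ofReal (τ ^ (2*α-1)) * H τ)) τ := by
      intro τ
      by_cases hτ : τ ∈ Icc n m
      · have hτ0 : (0:ℝ) < τ := lt_of_lt_of_le hn hτ.1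
        have h2τ : 2*τ ∈ Icc (2*n) (2*m) := ⟨by linarith [hτ.1], by linarith [hτ.2]⟩
        rw [indicator_of_mem h2τ, indicator_of_mem hτ,
          show (2*τ)/2 = τ by ring]
        refine le_of_eq ?_
        have h4 : (4:ℝ) ^ α = 2 * 2 ^ (2*α-1) := by
          have e1 : (2:ℝ) * 2 ^ (2*α-1) = 2 ^ (1 + (2*α-1)) := by
            rw [Real.rpow_add (by norm_num : (0:ℝ) < 2), Real.rpow_one]
          rw [e1, show (1 + (2*α-1)) = 2*α by ring,
            Real.rpow_mul (by norm_num : (0:ℝ) ≤ 2),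
            show ((2:ℝ) ^ (2:ℝ)) = 4 by
              rw [show (2:ℝ) = ((2:ℕ):ℝ) by norm_num, Real.rpow_natCast]; norm_num]
        have hreal : |(2:ℝ)| * ((2*τ) ^ (2*α-1) * B) = (4:ℝ) ^ α * B * τ ^ (2*α-1) := by
          rw [abs_of_nonneg (by norm_num : (0:ℝ) ≤ 2),
            Real.mul_rpow (by norm_num) hτ0.le, h4]
          ring
        calc ENNReal.ofReal |2| * (ENNReal.ofReal ((2*τ) ^ (2*α-1) * B) * H τ)
            = ENNReal.ofReal (|2| * ((2*τ) ^ (2*α-1) * B)) * H τ := by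
              rw [← mul_assoc, ← ENNReal.ofReal_mul (abs_nonneg 2)]
          _ = ENNReal.ofReal ((4:ℝ) ^ α * B * τ ^ (2*α-1)) * H τ := by rw [hreal]
          _ = ENNReal.ofReal ((4:ℝ) ^ α * B) *
                (ENNReal.ofReal (τ ^ (2*α-1)) * H τ) := by
              rw [ENNReal.ofReal_mul (by positivity), mul_assoc]
      · rw [indicator_of_notMem hτ, indicator_of_notMem (fun h2τ => hτ
          ⟨by linarith [h2τ.1], by linarith [h2τ.2]⟩), mul_zero]
    calc ∫⁻ τ, ENNReal.ofReal |2| * (Icc (2*n) (2*m)).indicator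
          (fun u => ENNReal.ofReal (u ^ (2*α-1) * B) * H (u/2)) (2*τ)
        ≤ ∫⁻ τ, (Icc n m).indicator
            (fun τ => ENNReal.ofReal ((4:ℝ) ^ α * B) *
              (ENNReal.ofReal (τ ^ (2*α-1)) * H τ)) τ := lintegral_mono hpt
      _ = ∫⁻ τ in Icc n m, ENNReal.ofReal ((4:ℝ) ^ α * B) *
            (ENNReal.ofReal (τ ^ (2*α-1)) * H τ) :=
          lintegral_indicator measurableSet_Icc _
      _ = ENNReal.ofReal ((4:ℝ) ^ α * B) *
            ∫⁻ τ in Icc n m, ENNReal.ofReal (τ ^ (2*α-1)) * H τ :=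
          lintegral_const_mul' _ _ ENNReal.ofReal_ne_top
  calc (∫⁻ t in Icc n m, ∫⁻ s in Icc n m,
        ENNReal.ofReal (t ^ (α-1) * s ^ (α-1)) * H ((t+s)/2))
      ≤ ∫⁻ t, ∫⁻ s, Fker α n m H t s := stepA
    _ = ∫⁻ u, ∫⁻ t, Fker α n m H t (u - t) := stepBC
    _ = ∫⁻ u, (Icc (2*n) (2*m)).indicator
          (fun u => ENNReal.ofReal (u ^ (2*α-1) * B) * H (u/2)) u :=
        lintegral_congr stepD
    _ ≤ ENNReal.ofReal ((4:ℝ) ^ α * B) *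
          ∫⁻ τ in Icc n m, ENNReal.ofReal (τ ^ (2*α-1)) * H τ := stepF

/-- For `0 < n < m`, `α > 0` and `x ∈ X`:
`∫ₙ^m ∫ₙ^m t^{α-1} s^{α-1} ‖e^{-(t+s)A/2} x‖² dt ds
  ≤ 4^α B(α,α) ∫ₙ^m τ^{2α-1} ‖e^{-τA} x‖² dτ`, where `B(α,α) = Γ(α)²/Γ(2α)`. -/
theorem stmt18 {ι : Type*} [MeasurableSpace ι] (μ : Measure ι)
    (a : ι → ℝ) (hameas : Measurable a) (ha0 : ∀ i, 0 ≤ a i)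
    (α : ℝ) (hα : 0 < α) (x : ι → ℂ) (hx : MemLp x 2 μ)
    (n m : ℝ) (hn : 0 < n) (hnm : n < m) :
    (∫⁻ t in Set.Icc n m, ∫⁻ s in Set.Icc n m,
        ENNReal.ofReal (t ^ (α - 1) * s ^ (α - 1)) *
          ∫⁻ i, (‖x i‖₊ : ℝ≥0∞) ^ 2 * ENNReal.ofReal (Real.exp (-((t + s) * a i))) ∂μ)
      ≤ ENNReal.ofReal ((4 : ℝ) ^ α * (Real.Gamma α ^ 2 / Real.Gamma (2 * α))) *
          ∫⁻ τ in Set.Icc n m, ENNReal.ofReal (τ ^ (2 * α - 1)) * heatNormSq μ a x τ := by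
  have hanti : Antitone (heatNormSq μ a x) := by
    intro t1 t2 h12
    refine lintegral_mono fun i => ?_
    exact mul_le_mul_right
      (ENNReal.ofReal_le_ofReal (Real.exp_le_exp.2 (by nlinarith [ha0 i]))) _
  have hHm : Measurable (heatNormSq μ a x) := hanti.measurable
  have hinner : ∀ t s : ℝ,
      (∫⁻ i, (‖x i‖₊ : ℝ≥0∞) ^ 2 * ENNReal.ofReal (Real.exp (-((t + s) * a i))) ∂μ)
        = heatNormSq μ a x ((t + s) / 2) := by
    intro t s
    unfold heatNormSq
    have e : 2 * ((t + s) / 2) = t + s := by ring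
    rw [e]
  simp_rw [hinner]
  exact key (heatNormSq μ a x) hHm hα hn hnm
end
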